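/- Let E be a real Banach space and let u : (0,∞) → E be strongly measurable with ∫₀^∞ (1 + |log s|)·‖u(s)‖ ds/s < ∞ and ∫₀^∞ u(s) ds/s = 0 (as a Bochner integral). Let w : (0,∞) → ℝ be integrable on (0,t) for every t > 0 with ‖w‖_W := sup_{t>0} |Pw(t) − w(t)| < ∞. Then s ↦ Pw(s)·u(s)/s is Bochner integrable, the function t ↦ (Pw(t) − w(t))·(∫₀ᵗ u(s) ds/s)/t is Bochner integrable, and ∫₀^∞ Pw(s)·u(s) ds/s = ∫₀^∞ (Pw(t) − w(t))·(∫₀ᵗ u(s) ds/s) dt/t. -/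

import Mathlib

/-!
Since `(Pw)' = -(Pw - w)/t` almost everywhere and `Pw` is locally absolutely continuous,
`Pw(s) = Pw(1) + ∫ₛ¹ (Pw - w)(t) dt/t`, and `|Pw - w| ≤ C` makes the last integral `O(|log s|)`.
The constant `Pw(1)` integrates to zero against `u(s) ds/s`. What remains is a double integral
against the kernel `1_{s<t} - 1_{1<t}`, absolutely convergent by the logarithmic moment of `u`;
exchanging the order of integration, the kernel integrates against `u(s) ds/s` to `∫₀ᵗ u(s) ds/s`,
by the cancellation once more.
-/

open MeasureTheory Set Real Filter

/-- The averaging operator `Pw(t) = (1/t) ∫₀ᵗ w(s) ds`. -/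
noncomputable def Pav (w : ℝ → ℝ) (t : ℝ) : ℝ := (1 / t) * ∫ s in Ioo (0 : ℝ) t, w s

open scoped Interval

section Average

variable {w : ℝ → ℝ}

theorem intervalIntegrable_of_integrableOn_Ioo (hw : ∀ t > (0 : ℝ), IntegrableOn w (Ioo 0 t))
    {a b : ℝ} (ha : 0 ≤ a) (hb : 0 ≤ b) : IntervalIntegrable w volume a b := by
  rw [intervalIntegrable_iff]
  refine (hw (max a b + 1) (by positivity)).mono_set fun x hx => ⟨?_, ?_⟩
  · exact (le_min ha hb).trans_lt hx.1
  · linarith [hx.2]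

theorem aestronglyMeasurable_of_integrableOn_Ioo
    (hw : ∀ t > (0 : ℝ), IntegrableOn w (Ioo 0 t)) :
    AEStronglyMeasurable w (volume.restrict (Ioi 0)) :=
  LocallyIntegrableOn.aestronglyMeasurable fun x hx =>
    ⟨Ioo 0 (x + 1), mem_nhdsWithin_of_mem_nhds (Ioo_mem_nhds hx (by linarith)),
      hw _ (by linarith [mem_Ioi.1 hx])⟩

theorem Pav_eq_inv_mul_intervalIntegral {t : ℝ} (ht : 0 ≤ t) :
    Pav w t = t⁻¹ * ∫ s in 0..t, w s := by
  rw [Pav, one_div, intervalIntegral.integral_of_le ht, integral_Ioc_eq_integral_Ioo]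

theorem continuousOn_Pav (hw : ∀ t > (0 : ℝ), IntegrableOn w (Ioo 0 t)) :
    ContinuousOn (Pav w) (Ioi 0) := by
  intro t (ht : 0 < t)
  have hprimitive : ContinuousAt (fun x => ∫ s in 0..x, w s) t :=
    ((intervalIntegrable_of_integrableOn_Ioo hw le_rfl (by linarith : (0 : ℝ) ≤ t + 1)
      ).absolutelyContinuousOnInterval_intervalIntegral left_mem_uIcc).continuousOn.continuousAt
      (uIcc_of_le (by linarith : (0 : ℝ) ≤ t + 1) ▸ Icc_mem_nhds ht (by linarith))
  refine (((continuousAt_inv₀ ht.ne').mul hprimitive).congr ?_).continuousWithinAt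
  filter_upwards [Ioi_mem_nhds ht] with x hx using (Pav_eq_inv_mul_intervalIntegral hx.le).symm

theorem intervalIntegral_Pav_sub_div_eq (hw : ∀ t > (0 : ℝ), IntegrableOn w (Ioo 0 t))
    {a b : ℝ} (ha : 0 < a) (hb : 0 < b) :
    ∫ t in a..b, (Pav w t - w t) / t = Pav w a - Pav w b := by
  set F : ℝ → ℝ := fun x => ∫ s in 0..x, w s
  have hw' : IntervalIntegrable w volume 0 (max a b) :=
    intervalIntegrable_of_integrableOn_Ioo hw le_rfl (ha.le.trans (le_max_left a b))
  have hsub : uIcc a b ⊆ uIcc 0 (max a b) := uIcc_subset_uIcc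
    (mem_uIcc_of_le ha.le (le_max_left a b)) (mem_uIcc_of_le hb.le (le_max_right a b))
  have hpos : ∀ x ∈ uIcc a b, 0 < x := fun x hx => (lt_min ha hb).trans_le hx.1
  have hAC : AbsolutelyContinuousOnInterval (fun x => x⁻¹ * F x) a b :=
    (ContDiffOn.absolutelyContinuousOnInterval (contDiffOn_inv ℝ |>.mono
      fun x hx => (hpos x hx).ne')).mul
      ((hw'.absolutelyContinuousOnInterval_intervalIntegral left_mem_uIcc).mono hsub)
  have hderiv : ∀ᵐ x, x ∈ Ι a b →
      deriv (fun x => x⁻¹ * F x) x = -((Pav w x - w x) / x) := by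
    filter_upwards [hw'.ae_hasDerivAt_integral] with x hF hx
    have hx0 : 0 < x := hpos x (uIoc_subset_uIcc hx)
    rw [((hasDerivAt_inv hx0.ne').fun_mul (hF (hsub (uIoc_subset_uIcc hx)) 0 left_mem_uIcc)).deriv,
      Pav_eq_inv_mul_intervalIntegral hx0.le]
    field_simp
    ring
  have hFTC := hAC.integral_deriv_eq_sub
  rw [intervalIntegral.integral_congr_ae hderiv, intervalIntegral.integral_neg] at hFTC
  rw [Pav_eq_inv_mul_intervalIntegral ha.le, Pav_eq_inv_mul_intervalIntegral hb.le]
  linarith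

theorem aestronglyMeasurable_Pav_sub_div (hw : ∀ t > (0 : ℝ), IntegrableOn w (Ioo 0 t)) :
    AEStronglyMeasurable (fun t => (Pav w t - w t) / t) (volume.restrict (Ioi 0)) :=
  (((continuousOn_Pav hw).aestronglyMeasurable measurableSet_Ioi).sub
    (aestronglyMeasurable_of_integrableOn_Ioo hw)).div₀ aestronglyMeasurable_id

end Average

section LogBound

variable {g : ℝ → ℝ} {C a b : ℝ}

theorem uIoc_subset_Ioi_zero (ha : 0 < a) (hb : 0 < b) : Ι a b ⊆ Ioi 0 :=
  fun _ hx => (lt_min ha hb).trans hx.1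

theorem intervalIntegrable_const_mul_inv (ha : 0 < a) (hb : 0 < b) :
    IntervalIntegrable (fun t => C * t⁻¹) volume a b :=
  (intervalIntegral.intervalIntegrable_inv (fun _ hx => ((lt_min ha hb).trans_le hx.1).ne')
    continuousOn_id).const_mul C

theorem integrableOn_uIoc_of_abs_le_mul_inv
    (hg : AEStronglyMeasurable g (volume.restrict (Ioi 0))) (hle : ∀ t > 0, |g t| ≤ C * t⁻¹)
    (ha : 0 < a) (hb : 0 < b) : IntegrableOn g (Ι a b) :=
  (intervalIntegrable_iff.1 (intervalIntegrable_const_mul_inv ha hb)).mono'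
    (hg.mono_measure (Measure.restrict_mono (uIoc_subset_Ioi_zero ha hb) le_rfl))
    ((ae_restrict_iff' measurableSet_uIoc).2 (Eventually.of_forall fun t ht =>
      hle t (uIoc_subset_Ioi_zero ha hb ht)))

theorem setIntegral_uIoc_abs_le_mul_abs_log (hle : ∀ t > 0, |g t| ≤ C * t⁻¹)
    (ha : 0 < a) (hb : 0 < b) : ∫ t in Ι a b, |g t| ≤ C * |log (b / a)| := by
  have hC : 0 ≤ C := nonneg_of_mul_nonneg_left ((abs_nonneg _).trans (hle a ha)) (inv_pos.2 ha)
  calc ∫ t in Ι a b, |g t| ≤ ∫ t in Ι a b, C * t⁻¹ :=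
        integral_mono_of_nonneg (Eventually.of_forall fun _ => abs_nonneg _)
          (intervalIntegrable_iff.1 (intervalIntegrable_const_mul_inv ha hb))
          ((ae_restrict_iff' measurableSet_uIoc).2 (Eventually.of_forall fun t ht =>
            hle t (uIoc_subset_Ioi_zero ha hb ht)))
    _ = |∫ t in a..b, C * t⁻¹| := by
        rw [intervalIntegral.abs_integral_eq_abs_integral_uIoc, abs_of_nonneg]
        exact setIntegral_nonneg measurableSet_uIoc fun t ht =>
          mul_nonneg hC (inv_nonneg.2 (uIoc_subset_Ioi_zero ha hb ht).le)
    _ = C * |log (b / a)| := by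
        rw [intervalIntegral.integral_const_mul, integral_inv_of_pos ha hb, abs_mul,
          abs_of_nonneg hC]

end LogBound

/-- The kernel `1_{(s, c]} - 1_{(c, s]}` of the oriented integral `∫ t in s..c`. -/
noncomputable def orientedIndicator (s c t : ℝ) : ℝ :=
  (Ioi s).indicator 1 t - (Ioi c).indicator 1 t

theorem orientedIndicator_eq (s c t : ℝ) :
    orientedIndicator s c t = (Ioc s c).indicator 1 t - (Ioc c s).indicator 1 t := by
  simp only [orientedIndicator, indicator_apply, mem_Ioi, mem_Ioc, Pi.one_apply]
  grind

theorem orientedIndicator_mul (s c t : ℝ) (g : ℝ → ℝ) :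
    orientedIndicator s c t * g t = (Ioc s c).indicator g t - (Ioc c s).indicator g t := by
  rw [orientedIndicator_eq, sub_mul]
  simp only [indicator_apply, Pi.one_apply]
  split_ifs <;> simp

theorem abs_orientedIndicator (s c t : ℝ) :
    |orientedIndicator s c t| = (Ι s c).indicator 1 t := by
  simp only [orientedIndicator_eq, uIoc_eq_union, indicator_apply, mem_union, mem_Ioc,
    Pi.one_apply]
  split_ifs <;> grind

theorem measurable_orientedIndicator (c : ℝ) :
    Measurable fun p : ℝ × ℝ => orientedIndicator p.1 c p.2 := by
  simp only [orientedIndicator, indicator_apply, mem_Ioi, Pi.one_apply]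
  exact (Measurable.ite (measurableSet_lt measurable_fst measurable_snd) measurable_const
    measurable_const).sub (Measurable.ite (measurableSet_lt measurable_const measurable_snd)
    measurable_const measurable_const)

section Fubini

variable {E : Type*} [NormedAddCommGroup E] [NormedSpace ℝ E] {g : ℝ → ℝ} {v : ℝ → E}
  {s c t : ℝ}

theorem integrable_orientedIndicator_mul (hg : IntegrableOn g (Ι s c)) :
    Integrable (fun t => orientedIndicator s c t * g t) (volume.restrict (Ioi 0)) := by
  simp_rw [orientedIndicator_mul]
  exact
    ((integrable_indicator_iff measurableSet_Ioc).2 (hg.mono_set Ioc_subset_uIoc).restrict).sub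
    ((integrable_indicator_iff measurableSet_Ioc).2 (hg.mono_set Ioc_subset_uIoc').restrict)

theorem setIntegral_Ioi_orientedIndicator_mul (hs : 0 < s) (hc : 0 < c)
    (hg : IntegrableOn g (Ι s c)) :
    ∫ t in Ioi 0, orientedIndicator s c t * g t = ∫ t in s..c, g t := by
  simp_rw [orientedIndicator_mul]
  rw [integral_sub
    ((integrable_indicator_iff measurableSet_Ioc).2 (hg.mono_set Ioc_subset_uIoc).restrict)
    ((integrable_indicator_iff measurableSet_Ioc).2 (hg.mono_set Ioc_subset_uIoc').restrict),
    setIntegral_indicator measurableSet_Ioc, setIntegral_indicator measurableSet_Ioc,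
    inter_eq_right.2 (Ioc_subset_Ioi_self.trans (Ioi_subset_Ioi hs.le)),
    inter_eq_right.2 (Ioc_subset_Ioi_self.trans (Ioi_subset_Ioi hc.le))]
  rfl

theorem setIntegral_Ioi_orientedIndicator_smul (hv : IntegrableOn v (Ioi 0)) :
    ∫ s in Ioi 0, orientedIndicator s c t • v s =
      (∫ s in Ioo 0 t, v s) - (Ioi c).indicator (1 : ℝ → ℝ) t • ∫ s in Ioi 0, v s := by
  have hpt : ∀ s, orientedIndicator s c t • v s =
      (Iio t).indicator v s - (Ioi c).indicator (1 : ℝ → ℝ) t • v s := by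
    intro s
    simp only [orientedIndicator, sub_smul, indicator_apply, mem_Ioi, mem_Iio, Pi.one_apply]
    split_ifs <;> simp
  have hconst : Integrable (fun s => (Ioi c).indicator (1 : ℝ → ℝ) t • v s)
      (volume.restrict (Ioi 0)) := hv.smul _
  simp_rw [hpt]
  rw [integral_sub (hv.indicator measurableSet_Iio) hconst,
    setIntegral_indicator measurableSet_Iio, Ioi_inter_Iio, integral_smul]

theorem integrable_orientedIndicator_mul_smul {B : ℝ → ℝ} (hc : 0 < c)
    (hg : AEStronglyMeasurable g (volume.restrict (Ioi 0))) (hgi : ∀ s > 0, IntegrableOn g (Ι s c))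
    (hv : AEStronglyMeasurable v (volume.restrict (Ioi 0))) (hB : IntegrableOn B (Ioi 0))
    (hbound : ∀ s > 0, (∫ t in Ι s c, |g t|) * ‖v s‖ ≤ B s) :
    Integrable (Function.uncurry fun s t => (orientedIndicator s c t * g t) • v s)
      ((volume.restrict (Ioi 0)).prod (volume.restrict (Ioi 0))) := by
  have hmeas : AEStronglyMeasurable
      (Function.uncurry fun s t => (orientedIndicator s c t * g t) • v s)
      ((volume.restrict (Ioi 0)).prod (volume.restrict (Ioi 0))) :=
    ((measurable_orientedIndicator c).aestronglyMeasurable.mul hg.comp_snd).smul hv.comp_fst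
  have hslice : ∀ s > 0, ∫ t in Ioi 0, ‖(orientedIndicator s c t * g t) • v s‖ =
      (∫ t in Ι s c, |g t|) * ‖v s‖ := by
    intro s hs
    have hpt : ∀ t, ‖(orientedIndicator s c t * g t) • v s‖ =
        (Ι s c).indicator (fun t => |g t| * ‖v s‖) t := by
      intro t
      rw [norm_smul, norm_mul, Real.norm_eq_abs, Real.norm_eq_abs, abs_orientedIndicator]
      by_cases ht : t ∈ Ι s c <;> simp [ht]
    simp_rw [hpt]
    rw [setIntegral_indicator measurableSet_uIoc, inter_eq_right.2 (uIoc_subset_Ioi_zero hs hc),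
      integral_mul_const]
  rw [integrable_prod_iff hmeas]
  constructor
  · filter_upwards [ae_restrict_mem measurableSet_Ioi] with s hs
    exact (integrable_orientedIndicator_mul (hgi s hs)).smul_const (v s)
  · refine hB.mono' hmeas.norm.integral_prod_right' ?_
    filter_upwards [ae_restrict_mem measurableSet_Ioi] with s hs
    simp only [Function.uncurry_apply_pair]
    rw [hslice s hs, Real.norm_of_nonneg (by positivity)]
    exact hbound s hs

theorem integral_intervalIntegral_smul_eq_integral_smul_integral_Ioo [CompleteSpace E]
    {B : ℝ → ℝ} (hc : 0 < c)
    (hg : AEStronglyMeasurable g (volume.restrict (Ioi 0))) (hgi : ∀ s > 0, IntegrableOn g (Ι s c))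
    (hv : IntegrableOn v (Ioi 0)) (hv₀ : ∫ s in Ioi 0, v s = 0) (hB : IntegrableOn B (Ioi 0))
    (hbound : ∀ s > 0, (∫ t in Ι s c, |g t|) * ‖v s‖ ≤ B s) :
    IntegrableOn (fun s => (∫ t in s..c, g t) • v s) (Ioi 0) ∧
      IntegrableOn (fun t => g t • ∫ s in Ioo 0 t, v s) (Ioi 0) ∧
      ∫ s in Ioi 0, (∫ t in s..c, g t) • v s = ∫ t in Ioi 0, g t • ∫ s in Ioo 0 t, v s := by
  have hF := integrable_orientedIndicator_mul_smul hc hg hgi hv.aestronglyMeasurable hB hbound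
  have hleft : EqOn (fun s => ∫ t in Ioi 0, (orientedIndicator s c t * g t) • v s)
      (fun s => (∫ t in s..c, g t) • v s) (Ioi 0) := fun s hs => by
    dsimp only
    rw [integral_smul_const, setIntegral_Ioi_orientedIndicator_mul hs hc (hgi s hs)]
  have hright : EqOn (fun t => ∫ s in Ioi 0, (orientedIndicator s c t * g t) • v s)
      (fun t => g t • ∫ s in Ioo 0 t, v s) (Ioi 0) := fun t _ => by
    simp_rw [mul_comm _ (g t), mul_smul]
    rw [integral_smul, setIntegral_Ioi_orientedIndicator_smul hv]
    simp only [hv₀, smul_zero, sub_zero]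
  refine ⟨IntegrableOn.congr_fun hF.integral_prod_left hleft measurableSet_Ioi,
    IntegrableOn.congr_fun hF.integral_prod_right hright measurableSet_Ioi, ?_⟩
  rw [← setIntegral_congr_fun measurableSet_Ioi hleft, integral_integral_swap hF,
    setIntegral_congr_fun measurableSet_Ioi hright]

end Fubini

section LogMoment

variable {E : Type*} [NormedAddCommGroup E] [NormedSpace ℝ E] {u : ℝ → E}

theorem norm_inv_smul {s : ℝ} (hs : 0 < s) (x : E) : ‖s⁻¹ • x‖ = ‖x‖ / s := by
  rw [norm_smul, norm_inv, Real.norm_of_nonneg hs.le, inv_mul_eq_div]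

theorem integrableOn_inv_smul_of_integrableOn_log_moment
    (hu : AEStronglyMeasurable u (volume.restrict (Ioi 0)))
    (hu_log : IntegrableOn (fun s => (1 + |log s|) * ‖u s‖ / s) (Ioi 0)) :
    IntegrableOn (fun s => s⁻¹ • u s) (Ioi 0) :=
  hu_log.mono' (measurable_inv.aestronglyMeasurable.smul hu) <|
    (ae_restrict_iff' measurableSet_Ioi).2 <| Eventually.of_forall fun s (hs : 0 < s) => by
      rw [norm_inv_smul hs]
      gcongr
      exact le_mul_of_one_le_left (norm_nonneg _) (le_add_of_nonneg_right (abs_nonneg _))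

theorem setIntegral_uIoc_one_abs_mul_norm_inv_smul_le {g : ℝ → ℝ} {C s : ℝ}
    (hle : ∀ t > 0, |g t| ≤ C * t⁻¹) (hs : 0 < s) :
    (∫ t in Ι s 1, |g t|) * ‖s⁻¹ • u s‖ ≤ C * ((1 + |log s|) * ‖u s‖ / s) := by
  have hlog := setIntegral_uIoc_abs_le_mul_abs_log hle hs one_pos
  rw [one_div, log_inv, abs_neg] at hlog
  have hC : 0 ≤ C := nonneg_of_mul_nonneg_left ((abs_nonneg _).trans (hle 1 one_pos)) (by norm_num)
  rw [norm_inv_smul hs, mul_div_assoc]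
  calc (∫ t in Ι s 1, |g t|) * (‖u s‖ / s) ≤ C * |log s| * (‖u s‖ / s) := by gcongr
    _ ≤ C * ((1 + |log s|) * (‖u s‖ / s)) := by
      rw [mul_assoc]
      gcongr
      linarith

end LogMoment

/-- Integration by parts: under the cancellation `∫₀^∞ u(s) ds/s = 0`,
`∫₀^∞ Pw(s) u(s) ds/s = ∫₀^∞ (Pw(t) − w(t)) (∫₀ᵗ u(s) ds/s) dt/t`. -/
theorem integration_by_parts_Pw {E : Type*} [NormedAddCommGroup E] [NormedSpace ℝ E]
    [CompleteSpace E] (u : ℝ → E) (w : ℝ → ℝ) (C : ℝ)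
    (hu_meas : AEStronglyMeasurable u (volume.restrict (Ioi 0)))
    (hu_int : IntegrableOn (fun s => (1 + |Real.log s|) * ‖u s‖ / s) (Ioi 0))
    (hu_cancel : ∫ s in Ioi (0 : ℝ), s⁻¹ • u s = 0)
    (hwInt : ∀ t > (0 : ℝ), IntegrableOn w (Ioo 0 t))
    (hW : ∀ t > (0 : ℝ), |Pav w t - w t| ≤ C) :
    IntegrableOn (fun s => (Pav w s / s) • u s) (Ioi 0) ∧
    IntegrableOn
      (fun t => ((Pav w t - w t) / t) • ∫ s in Ioo (0 : ℝ) t, s⁻¹ • u s) (Ioi 0) ∧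
    ∫ s in Ioi (0 : ℝ), (Pav w s / s) • u s =
      ∫ t in Ioi (0 : ℝ), ((Pav w t - w t) / t) • ∫ s in Ioo (0 : ℝ) t, s⁻¹ • u s := by
  set g : ℝ → ℝ := fun t => (Pav w t - w t) / t
  set v : ℝ → E := fun s => s⁻¹ • u s
  have hg_le : ∀ t > 0, |g t| ≤ C * t⁻¹ := fun t ht => by
    rw [abs_div, abs_of_pos ht, div_eq_mul_inv]
    exact mul_le_mul_of_nonneg_right (hW t ht) (inv_nonneg.2 ht.le)
  have hg : AEStronglyMeasurable g (volume.restrict (Ioi 0)) :=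
    aestronglyMeasurable_Pav_sub_div hwInt
  have hv : IntegrableOn v (Ioi 0) :=
    integrableOn_inv_smul_of_integrableOn_log_moment hu_meas hu_int
  obtain ⟨hint, hint', heq⟩ := integral_intervalIntegral_smul_eq_integral_smul_integral_Ioo
    one_pos hg (fun s hs => integrableOn_uIoc_of_abs_le_mul_inv hg hg_le hs one_pos) hv hu_cancel
    (hu_int.const_mul C) fun s hs => setIntegral_uIoc_one_abs_mul_norm_inv_smul_le hg_le hs
  have hsplit : EqOn (fun s => (Pav w s / s) • u s)
      (fun s => Pav w 1 • v s + (∫ t in s..1, g t) • v s) (Ioi 0) := fun s hs => by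
    have hPav : ∫ t in s..1, g t = Pav w s - Pav w 1 :=
      intervalIntegral_Pav_sub_div_eq hwInt hs one_pos
    dsimp only [v]
    rw [hPav, ← add_smul, add_sub_cancel, div_eq_mul_inv, mul_smul]
  have hconst : IntegrableOn (fun s => Pav w 1 • v s) (Ioi 0) := hv.smul _
  refine ⟨IntegrableOn.congr_fun (hconst.add hint) hsplit.symm measurableSet_Ioi, hint', ?_⟩
  rw [setIntegral_congr_fun measurableSet_Ioi hsplit, integral_add hconst hint, integral_smul,
    hu_cancel, smul_zero, zero_add, heq]
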